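/- There exists a constant $c > 0$ such that for all integers $n \geq 2$ and all $\mathbf{k} \in \{2,3,\dots\}^n$, the probability that the random directed graph $\vec{L}(n,\mathbf{k})$ contains no directed cycle is at most $\exp(-c\, n\, k^{n-2})$, where $k = \min_i k_i$. -/

import Mathlib

/-- Vertices of the Hamming graph `H(n,k)`: action profiles. -/
abbrev GVert (n : ℕ) (k : Fin n → ℕ) := ∀ i : Fin n, Fin (k i)

/-- Sample space of `L(n,k)`: for each coordinate `i` and each line in
coordinate `i` (encoded by the values on the remaining coordinates), a winner
(its `i`-th coordinate); chosen uniformly. -/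
abbrev LSpace (n : ℕ) (k : Fin n → ℕ) :=
  ∀ i : Fin n, ((∀ j : {j : Fin n // j ≠ i}, Fin (k j.1)) → Fin (k i))

/-- The best-response edge relation of `L(n,k)`: `u → v` iff `u ≠ v` lie on a
common line and `v` is the winner of that line. -/
def BREdge {n : ℕ} {k : Fin n → ℕ} (ω : LSpace n k) (u v : GVert n k) : Prop :=
  u ≠ v ∧ ∃ i : Fin n, (∀ j, j ≠ i → u j = v j) ∧ ω i (fun j => v j.1) = v i

/-- `L(n,k)` under the outcome `ω` contains a directed cycle. -/
def HasCycle {n : ℕ} {k : Fin n → ℕ} (ω : LSpace n k) : Prop :=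
  ∃ m : ℕ, ∃ _hm : 2 ≤ m, ∃ f : Fin m → GVert n k,
    Function.Injective f ∧ ∀ i : Fin m, BREdge ω (f i) (f (i + ⟨1, by omega⟩))

/-!
Split the coordinates into the `⌊n/2⌋` pairs `(2s, 2s+1)`. For each pair and each choice of the
remaining coordinates we get a plane, a copy of the grid `[k_{2s}] × [k_{2s+1}]`; distinct planes
share no line, so the outcomes of `ω` on them are independent. On a plane, `ω` is a pair of maps
`u : [k_{2s+1}] → [k_{2s}]`, `v : [k_{2s}] → [k_{2s+1}]` (the winners of rows and columns), and
a cycle of `u ∘ v` of length at least two lifts to a directed cycle alternating between rows and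
columns.

At least an eighth of all pairs `(u, v)` have such a cycle. Follow the orbit
`0 → u (v 0) → ⋯` until it first revisits a point. If it runs into a fixed point instead of a
longer cycle, redirect its last step to the start of the orbit; the last step can be read off
the result, so this injects the acyclic configurations into the cyclic ones, provided the
first two steps of the orbit are not degenerate. Each degenerate case is similarly at most as
likely as its complement. Hence `ω` is acyclic with probability at most
`(7/8)^#planes ≤ exp (-#planes / 8)`, and `#planes ≥ ⌊n/2⌋ k^(n-2) ≥ n k^(n-2) / 4`.
-/

open Function

def HasDirectedCycle {V : Type*} (R : V → V → Prop) : Prop :=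
  ∃ m : ℕ, ∃ _hm : 2 ≤ m, ∃ f : Fin m → V,
    Injective f ∧ ∀ i : Fin m, R (f i) (f (i + ⟨1, by omega⟩))

theorem hasDirectedCycle_of_periodic {V : Type*} {R : V → V → Prop} {P : ℕ → V} {m : ℕ}
    (hm : 2 ≤ m) (hper : Periodic P m) (hinj : ∀ r < m, ∀ r' < m, P r = P r' → r = r')
    (hR : ∀ r, R (P r) (P (r + 1))) : HasDirectedCycle R := by
  refine ⟨m, hm, fun i => P i, fun i j h => Fin.ext (hinj _ i.2 _ j.2 h), fun i => ?_⟩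
  change R (P i) (P (i + ⟨1, _⟩ : Fin m).val)
  rw [Fin.val_add, hper.map_mod_nat]
  exact hR i

theorem iterate_eq_of_forall_lt {α : Type*} {f g : α → α} {x : α} {n : ℕ}
    (h : ∀ r < n, g (f^[r] x) = f (f^[r] x)) : ∀ t ≤ n, g^[t] x = f^[t] x := by
  intro t ht
  induction t with
  | zero => rfl
  | succ t ih =>
    rw [iterate_succ_apply', iterate_succ_apply', ih (by omega), h t (by omega)]

theorem iterate_eq_iterate_iff_modEq {α : Type*} {f : α → α} {x : α} {i j : ℕ}
    (hx : x ∈ periodicPts f) :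
    f^[i] x = f^[j] x ↔ i ≡ j [MOD minimalPeriod f x] := by
  have hpos := minimalPeriod_pos_of_mem_periodicPts hx
  rw [← iterate_mod_minimalPeriod_eq (n := i), ← iterate_mod_minimalPeriod_eq (n := j),
    iterate_eq_iterate_iff_of_lt_minimalPeriod (Nat.mod_lt _ hpos) (Nat.mod_lt _ hpos)]
  rfl

theorem card_forall_restrict_mul {Z X : Type*} [Fintype Z]
    {T : Z → Type*} {β : X → Type*}
    (g : (Σ z, T z) → X) (hg : Injective g)
    (P : ∀ z, (∀ t : T z, β (g ⟨z, t⟩)) → Prop) :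
    Nat.card {ω : ∀ x, β x // ∀ z, P z fun t => ω (g ⟨z, t⟩)} *
        ∏ z, Nat.card (∀ t, β (g ⟨z, t⟩)) =
      (∏ z, Nat.card {w // P z w}) * Nat.card (∀ x, β x) := by
  classical
  let split : (∀ x, β x) ≃ (∀ z t, β (g ⟨z, t⟩)) × ∀ x : {x // x ∉ Set.range g}, β x :=
    (Equiv.piEquivPiSubtypeProd (· ∈ Set.range g) β).trans <| Equiv.prodCongrLeft fun _ =>
      (Equiv.piCongrLeft (fun x : Set.range g => β x) (.ofInjective g hg)).symm.trans
        (Equiv.piCurry fun z t => β (g ⟨z, t⟩))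
  have hsub : Nat.card {ω : ∀ x, β x // ∀ z, P z fun t => ω (g ⟨z, t⟩)} =
      (∏ z, Nat.card {w // P z w}) * Nat.card (∀ x : {x // x ∉ Set.range g}, β x) := by
    rw [← Nat.card_pi, ← Nat.card_prod]
    exact Nat.card_congr <| (split.subtypeEquiv fun ω => Iff.rfl).trans <|
      Equiv.prodSubtypeFstEquivSubtypeProd.trans <|
        Equiv.prodCongrLeft fun _ => Equiv.subtypePiEquivPi
  rw [hsub, Nat.card_congr split, Nat.card_prod, Nat.card_pi (α := Z)]
  ring

theorem pow_mul_card_forall_restrict_le {Z X : Type*} [Fintype Z]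
    {T : Z → Type*} [∀ z, Finite (T z)] {β : X → Type*} [∀ x, Finite (β x)]
    (g : (Σ z, T z) → X) (hg : Injective g)
    (P : ∀ z, (∀ t : T z, β (g ⟨z, t⟩)) → Prop) {a b : ℕ}
    (hP : ∀ z, a * Nat.card {w // P z w} ≤ b * Nat.card (∀ t, β (g ⟨z, t⟩))) :
    a ^ Fintype.card Z * Nat.card {ω : ∀ x, β x // ∀ z, P z fun t => ω (g ⟨z, t⟩)} ≤
      b ^ Fintype.card Z * Nat.card (∀ x, β x) := by
  rcases isEmpty_or_nonempty (∀ x, β x) with _ | ⟨⟨ω⟩⟩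
  · simp
  have hA : 0 < ∏ z, Nat.card (∀ t, β (g ⟨z, t⟩)) :=
    Finset.prod_pos fun z _ => have : Nonempty (∀ t, β (g ⟨z, t⟩)) := ⟨fun _ => ω _⟩; Nat.card_pos
  have hprod : a ^ Fintype.card Z * ∏ z, Nat.card {w // P z w} ≤
      b ^ Fintype.card Z * ∏ z, Nat.card (∀ t, β (g ⟨z, t⟩)) := by
    simp only [← Finset.card_univ, ← Finset.prod_const, ← Finset.prod_mul_distrib]
    exact Finset.prod_le_prod' fun z _ => hP z
  refine Nat.le_of_mul_le_mul_right ?_ hA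
  calc _ = a ^ Fintype.card Z * ((∏ z, Nat.card {w // P z w}) * Nat.card (∀ x, β x)) := by
        rw [← card_forall_restrict_mul g hg P]; ring
    _ ≤ b ^ Fintype.card Z * (∏ z, Nat.card (∀ t, β (g ⟨z, t⟩))) * Nat.card (∀ x, β x) := by
        rw [← mul_assoc]; gcongr
    _ = _ := by ring

/-- On the grid `Fin L × Fin M`, `c.1 y` is the winner of the row `Fin L × {y}` and `c.2 x` that
of the column `{x} × Fin M`. -/
abbrev PlaneCfg (L M : ℕ) := (Fin M → Fin L) × (Fin L → Fin M)

namespace PlaneCfg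

variable {L M : ℕ}

def ret (c : PlaneCfg L M) : Fin L → Fin L := c.1 ∘ c.2

def IsCyclic (c : PlaneCfg L M) : Prop := ∃ x, 1 < minimalPeriod c.ret x

theorem isCyclic_of_isPeriodicPt {c : PlaneCfg L M} {x : Fin L} {p : ℕ} (hp : 0 < p)
    (hx : IsPeriodicPt c.ret p x) (hfix : c.ret x ≠ x) : c.IsCyclic :=
  ⟨x, lt_of_le_of_ne (hx.minimalPeriod_pos hp) fun h =>
    hfix (minimalPeriod_eq_one_iff_isFixedPt.1 h.symm)⟩

section Orbit

variable [NeZero L] (c : PlaneCfg L M)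

def xs (t : ℕ) : Fin L := c.ret^[t] 0

def ys (t : ℕ) : Fin M := c.2 (c.xs t)

theorem xs_succ (t : ℕ) : c.xs (t + 1) = c.1 (c.ys t) := iterate_succ_apply' _ _ _

theorem ret_xs (t : ℕ) : c.ret (c.xs t) = c.xs (t + 1) := (iterate_succ_apply' _ _ _).symm

theorem xs_add (s t : ℕ) : c.xs (s + t) = c.ret^[s] (c.xs t) := iterate_add_apply _ _ _ _

theorem exists_xs_eq_xs : ∃ t, 0 < t ∧ ∃ s < t, c.xs t = c.xs s := by
  obtain ⟨s, t, hst, he⟩ := Fintype.exists_ne_map_eq_of_card_lt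
    (fun t : Fin (L + 1) => c.xs t) (by simp)
  rcases Nat.lt_or_gt_of_ne (Fin.val_ne_of_ne hst) with h | h
  · exact ⟨t, by omega, s, h, he.symm⟩
  · exact ⟨s, by omega, t, h, he⟩

def repeatTime : ℕ := Nat.find c.exists_xs_eq_xs

theorem repeatTime_pos : 0 < c.repeatTime := (Nat.find_spec c.exists_xs_eq_xs).1

theorem exists_xs_repeatTime_eq : ∃ s < c.repeatTime, c.xs c.repeatTime = c.xs s :=
  (Nat.find_spec c.exists_xs_eq_xs).2

theorem xs_ne_xs {s t : ℕ} (hst : s < t) (ht : t < c.repeatTime) : c.xs t ≠ c.xs s :=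
  fun h => Nat.find_min c.exists_xs_eq_xs ht ⟨by omega, s, hst, h⟩

variable {c}

theorem repeatTime_eq {T s : ℕ} (hs : s < T) (hT : c.xs T = c.xs s)
    (hinj : ∀ r t, r < t → t < T → c.xs t ≠ c.xs r) : c.repeatTime = T := by
  refine le_antisymm (Nat.find_le ⟨by omega, s, hs, hT⟩) (not_lt.1 fun hlt => ?_)
  obtain ⟨r, hr, he⟩ := c.exists_xs_repeatTime_eq
  exact hinj r _ hr hlt he

theorem two_le_repeatTime (h1 : c.xs 1 ≠ 0) : 2 ≤ c.repeatTime := by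
  by_contra! h
  obtain ⟨s, hs, he⟩ := c.exists_xs_repeatTime_eq
  have hT : c.repeatTime = 1 := by have := c.repeatTime_pos; omega
  obtain rfl : s = 0 := by omega
  exact h1 (hT ▸ he)

theorem isCyclic_of_xs_eq {s t : ℕ} (hst : s < t) (h : c.xs t = c.xs s)
    (hne : c.xs (s + 1) ≠ c.xs s) : c.IsCyclic :=
  isCyclic_of_isPeriodicPt (x := c.xs s) (p := t - s) (by omega)
    (by rw [IsPeriodicPt, IsFixedPt, ← xs_add, Nat.sub_add_cancel hst.le, h])
    (by rwa [ret_xs])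

theorem xs_repeatTime_of_not_isCyclic (hc : ¬ c.IsCyclic) :
    c.xs c.repeatTime = c.xs (c.repeatTime - 1) := by
  obtain ⟨s, hs, he⟩ := c.exists_xs_repeatTime_eq
  rcases Nat.lt_or_ge (s + 1) c.repeatTime with hs' | hs'
  · exact absurd (isCyclic_of_xs_eq hs he (c.xs_ne_xs (Nat.lt_succ_self s) hs')) hc
  · rwa [show c.repeatTime - 1 = s by omega]

theorem xs_eq_of_ret_eq {c' : PlaneCfg L M} {N : ℕ}
    (h : ∀ r < N, c'.ret (c.xs r) = c.ret (c.xs r)) : ∀ t ≤ N, c'.xs t = c.xs t :=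
  iterate_eq_of_forall_lt h

end Orbit

section Rewire

variable [NeZero L] {c : PlaneCfg L M}

def IsGeneric (c : PlaneCfg L M) : Prop := c.xs 1 ≠ 0 ∧ c.ys 1 ≠ c.ys 0

theorem eq_sub_of_ys_eq_ys (hc : ¬ c.IsCyclic) {r t : ℕ} (hrt : r < t) (ht : t < c.repeatTime)
    (h : c.ys t = c.ys r) : t = c.repeatTime - 1 ∧ r = c.repeatTime - 2 := by
  have hx : c.xs (t + 1) = c.xs (r + 1) := by rw [xs_succ, xs_succ, h]
  rcases Nat.lt_or_ge (t + 1) c.repeatTime with h' | h'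
  · exact absurd hx (c.xs_ne_xs (by omega) h')
  rw [show t + 1 = c.repeatTime by omega, xs_repeatTime_of_not_isCyclic hc] at hx
  rcases Nat.lt_or_ge (r + 1) (c.repeatTime - 1) with h'' | h''
  · exact absurd hx (c.xs_ne_xs h'' (by omega))
  · omega

theorem repeatTime_eq_and_isCyclic {c' : PlaneCfg L M} {e : ℕ} (he : e + 2 ≤ c.repeatTime)
    (hpre : ∀ t ≤ c.repeatTime - 1, c'.xs t = c.xs t) (hlast : c'.xs c.repeatTime = c.xs e) :
    c'.repeatTime = c.repeatTime ∧ c'.IsCyclic := by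
  have hrep : c'.xs c.repeatTime = c'.xs e := by rw [hlast, hpre e (by omega)]
  refine ⟨repeatTime_eq (by omega) hrep fun r t hrt ht => ?_, isCyclic_of_xs_eq (by omega) hrep ?_⟩
  · rw [hpre t (by omega), hpre r (by omega)]
    exact c.xs_ne_xs hrt ht
  · rw [hpre e (by omega), hpre (e + 1) (by omega)]
    exact c.xs_ne_xs (Nat.lt_succ_self e) (by omega)

def rewire (c : PlaneCfg L M) : PlaneCfg L M :=
  if c.ys (c.repeatTime - 1) = c.ys (c.repeatTime - 2) then
    (c.1, update c.2 (c.xs (c.repeatTime - 1)) (c.ys 0))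
  else (update c.1 (c.ys (c.repeatTime - 1)) 0, c.2)

-- The orbit of `c.rewire` re-enters at `xs 0 = 0` or at `xs 1 ≠ 0`, which tells the two
-- cases of `rewire` apart.
def unrewire (c : PlaneCfg L M) : PlaneCfg L M :=
  if c.xs c.repeatTime = 0 then
    (update c.1 (c.ys (c.repeatTime - 1)) (c.xs (c.repeatTime - 1)), c.2)
  else (c.1, update c.2 (c.xs (c.repeatTime - 1)) (c.ys (c.repeatTime - 2)))

theorem rewire_spec_of_ne (hg : c.IsGeneric) (hc : ¬ c.IsCyclic)
    (hne : c.ys (c.repeatTime - 1) ≠ c.ys (c.repeatTime - 2)) :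
    c.rewire.IsGeneric ∧ c.rewire.IsCyclic ∧ c.rewire.unrewire = c := by
  have hT := two_le_repeatTime hg.1
  rw [rewire, if_neg hne]
  set c' : PlaneCfg L M := (update c.1 (c.ys (c.repeatTime - 1)) 0, c.2)
  have hys : ∀ r < c.repeatTime - 1, c.ys r ≠ c.ys (c.repeatTime - 1) := fun r hr h => by
    obtain ⟨-, rfl⟩ := eq_sub_of_ys_eq_ys hc hr (by omega) h.symm
    exact hne h.symm
  have hpre : ∀ t ≤ c.repeatTime - 1, c'.xs t = c.xs t :=
    xs_eq_of_ret_eq fun r hr => update_of_ne (hys r hr) _ _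
  have hys' : ∀ t ≤ c.repeatTime - 1, c'.ys t = c.ys t := fun t ht => congrArg c.2 (hpre t ht)
  have hlast : c'.xs c.repeatTime = 0 := by
    rw [← Nat.sub_add_cancel (by omega : 1 ≤ c.repeatTime), xs_succ, hys' _ le_rfl]
    exact update_self _ _ _
  obtain ⟨hT', hcyc⟩ := repeatTime_eq_and_isCyclic (e := 0) (by omega) hpre hlast
  refine ⟨⟨?_, ?_⟩, hcyc, ?_⟩
  · rw [hpre 1 (by omega)]; exact hg.1
  · rw [hys' 1 (by omega), hys' 0 (by omega)]; exact hg.2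
  · rw [unrewire, hT', if_pos hlast, hpre _ le_rfl, hys' _ le_rfl]
    refine Prod.ext ?_ rfl
    rw [update_idem, update_eq_self_iff, ← xs_succ, Nat.sub_add_cancel (by omega),
      xs_repeatTime_of_not_isCyclic hc]

theorem rewire_spec_of_eq (hg : c.IsGeneric)
    (heq : c.ys (c.repeatTime - 1) = c.ys (c.repeatTime - 2)) :
    c.rewire.IsGeneric ∧ c.rewire.IsCyclic ∧ c.rewire.unrewire = c := by
  have hT : 3 ≤ c.repeatTime := by
    have := two_le_repeatTime hg.1
    by_contra! h
    rw [show c.repeatTime = 2 by omega] at heq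
    exact hg.2 heq
  rw [rewire, if_pos heq]
  set c' : PlaneCfg L M := (c.1, update c.2 (c.xs (c.repeatTime - 1)) (c.ys 0))
  have hv : ∀ r < c.repeatTime - 1, c'.2 (c.xs r) = c.ys r := fun r hr =>
    update_of_ne (c.xs_ne_xs hr (by omega)).symm _ _
  have hpre : ∀ t ≤ c.repeatTime - 1, c'.xs t = c.xs t :=
    xs_eq_of_ret_eq fun r hr => congrArg c.1 (hv r hr)
  have hys' : ∀ t < c.repeatTime - 1, c'.ys t = c.ys t := fun t ht => by
    rw [ys, hpre t ht.le, hv t ht]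
  have hlast : c'.xs c.repeatTime = c.xs 1 := by
    rw [← Nat.sub_add_cancel (by omega : 1 ≤ c.repeatTime), xs_succ, ys, hpre _ le_rfl]
    change c.1 (update c.2 _ (c.ys 0) _) = _
    rw [update_self]
    exact (c.xs_succ 0).symm
  obtain ⟨hT', hcyc⟩ := repeatTime_eq_and_isCyclic (e := 1) (by omega) hpre hlast
  have hx1 : c'.xs 1 = c.xs 1 := hpre 1 (by omega)
  refine ⟨⟨hx1 ▸ hg.1, ?_⟩, hcyc, ?_⟩
  · rw [hys' 1 (by omega), hys' 0 (by omega)]; exact hg.2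
  · rw [unrewire, hT', if_neg (hlast ▸ hg.1), hpre _ le_rfl, hys' _ (by omega), ← heq]
    refine Prod.ext rfl ?_
    rw [update_idem]
    exact update_eq_self _ _

theorem ncard_generic_not_isCyclic_le :
    {c : PlaneCfg L M | c.IsGeneric ∧ ¬ c.IsCyclic}.ncard ≤
      {c : PlaneCfg L M | c.IsGeneric ∧ c.IsCyclic}.ncard := by
  have key (c : PlaneCfg L M) (hg : c.IsGeneric) (hc : ¬ c.IsCyclic) :
      c.rewire.IsGeneric ∧ c.rewire.IsCyclic ∧ c.rewire.unrewire = c := by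
    by_cases h : c.ys (c.repeatTime - 1) = c.ys (c.repeatTime - 2)
    exacts [rewire_spec_of_eq hg h, rewire_spec_of_ne hg hc h]
  exact Set.ncard_le_ncard_of_injOn rewire
    (fun c hc => ⟨(key c hc.1 hc.2).1, (key c hc.1 hc.2).2.1⟩)
    (Set.LeftInvOn.injOn (f₁' := unrewire) fun c hc => (key c hc.1 hc.2).2.2)

theorem ncard_xs_one_eq_zero_le (hL : 2 ≤ L) :
    {c : PlaneCfg L M | c.xs 1 = 0}.ncard ≤ {c : PlaneCfg L M | c.xs 1 ≠ 0}.ncard := by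
  have h10 : (⟨1, hL⟩ : Fin L) ≠ 0 := by simp [Fin.ext_iff]
  refine Set.ncard_le_ncard_of_injOn (fun c => (update c.1 (c.2 0) ⟨1, hL⟩, c.2))
    (fun c _ => ?_) (Set.LeftInvOn.injOn (f₁' := fun c => (update c.1 (c.2 0) 0, c.2))
      fun c hc => Prod.ext ?_ rfl)
  · change update c.1 (c.2 0) _ (c.2 0) ≠ 0
    rwa [update_self]
  · change c.1 (c.2 0) = 0 at hc
    change update (update c.1 (c.2 0) _) (c.2 0) 0 = c.1
    rw [update_idem, update_eq_self_iff, hc]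

theorem ncard_ys_one_eq_le (hM : 2 ≤ M) :
    {c : PlaneCfg L M | c.xs 1 ≠ 0 ∧ c.ys 1 = c.ys 0}.ncard ≤
      {c : PlaneCfg L M | c.IsGeneric}.ncard := by
  have : Nontrivial (Fin M) := Fin.nontrivial_iff_two_le.2 hM
  choose other hother using fun y : Fin M => exists_ne y
  have hpre (c : PlaneCfg L M) (h1 : c.xs 1 ≠ 0) (y : Fin M) :
      xs (c.1, update c.2 (c.xs 1) y) 1 = c.xs 1 :=
    congrArg c.1 (update_of_ne (Ne.symm h1) y c.2)
  refine Set.ncard_le_ncard_of_injOn (fun c => (c.1, update c.2 (c.xs 1) (other (c.2 0))))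
    (fun c hc => ?_) (Set.LeftInvOn.injOn (f₁' := fun c => (c.1, update c.2 (c.xs 1) (c.2 0)))
      fun c hc => Prod.ext rfl ?_)
  · refine ⟨(hpre c hc.1 _).trans_ne hc.1, ?_⟩
    rw [ys, ys, hpre c hc.1]
    change update c.2 _ _ (c.xs 1) ≠ update c.2 _ _ 0
    rw [update_self, update_of_ne (Ne.symm hc.1)]
    exact hother _
  · change update (update c.2 (c.xs 1) _) _ (update c.2 (c.xs 1) _ 0) = c.2
    rw [hpre c hc.1, update_of_ne (Ne.symm hc.1), update_idem, update_eq_self_iff]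
    exact hc.2.symm

end Rewire

theorem eight_mul_ncard_not_isCyclic_le (hL : 2 ≤ L) (hM : 2 ≤ M) :
    8 * {c : PlaneCfg L M | ¬ c.IsCyclic}.ncard ≤ 7 * Nat.card (PlaneCfg L M) := by
  have : NeZero L := ⟨by omega⟩
  -- each injection at least halves what is left: a `1/8` of all configurations is generic
  -- and cyclic
  have inj₁ := ncard_xs_one_eq_zero_le (M := M) hL
  have inj₂ := ncard_ys_one_eq_le (L := L) hM
  have inj₃ := ncard_generic_not_isCyclic_le (L := L) (M := M)
  have part₁ : {c : PlaneCfg L M | c.xs 1 = 0}.ncard + {c : PlaneCfg L M | c.xs 1 ≠ 0}.ncard =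
      Nat.card (PlaneCfg L M) := Set.ncard_add_ncard_compl _
  have part₂ : {c : PlaneCfg L M | c.xs 1 ≠ 0 ∧ c.ys 1 = c.ys 0}.ncard +
      {c : PlaneCfg L M | c.IsGeneric}.ncard = {c : PlaneCfg L M | c.xs 1 ≠ 0}.ncard :=
    Set.ncard_inter_add_ncard_sdiff_eq_ncard _ {c : PlaneCfg L M | c.ys 1 = c.ys 0}
  have part₃ : {c : PlaneCfg L M | c.IsGeneric ∧ c.IsCyclic}.ncard +
      {c : PlaneCfg L M | c.IsGeneric ∧ ¬ c.IsCyclic}.ncard =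
        {c : PlaneCfg L M | c.IsGeneric}.ncard :=
    Set.ncard_inter_add_ncard_sdiff_eq_ncard _ {c : PlaneCfg L M | c.IsCyclic}
  have part₄ : {c : PlaneCfg L M | c.IsCyclic}.ncard + {c : PlaneCfg L M | ¬ c.IsCyclic}.ncard =
      Nat.card (PlaneCfg L M) := Set.ncard_add_ncard_compl _
  have hsub : {c : PlaneCfg L M | c.IsGeneric ∧ c.IsCyclic}.ncard ≤
      {c : PlaneCfg L M | c.IsCyclic}.ncard := Set.ncard_le_ncard fun c hc => hc.2
  omega

theorem IsCyclic.hasDirectedCycle {V : Type*} {R : V → V → Prop}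
    {c : PlaneCfg L M} (hc : c.IsCyclic) (pt : Fin L → Fin M → V)
    (hpt : ∀ x y x' y', pt x y = pt x' y' → x = x' ∧ y = y')
    (hrow : ∀ x y, x ≠ c.1 y → R (pt x y) (pt (c.1 y) y))
    (hcol : ∀ x y, y ≠ c.2 x → R (pt x y) (pt x (c.2 x))) : HasDirectedCycle R := by
  obtain ⟨x₀, hq⟩ := hc
  set q := minimalPeriod c.ret x₀
  have hx₀ : x₀ ∈ periodicPts c.ret := minimalPeriod_pos_iff_mem_periodicPts.1 (by omega)
  set A : ℕ → Fin L := fun i => c.ret^[i] x₀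
  have hA (i j : ℕ) : A i = A j ↔ i ≡ j [MOD q] := iterate_eq_iterate_iff_modEq hx₀
  have hA_succ (i : ℕ) : A (i + 1) = c.1 (c.2 (A i)) := iterate_succ_apply' _ _ _
  have hB (i j : ℕ) (h : c.2 (A i) = c.2 (A j)) : i ≡ j [MOD q] :=
    Nat.ModEq.add_right_cancel' 1 <| (hA _ _).1 <| by rw [hA_succ, hA_succ, h]
  have hstep (i : ℕ) : ¬ i ≡ i + 1 [MOD q] := fun h => by
    have := Nat.ModEq.add_left_cancel' (a := 0) (b := 1) i h
    simp [Nat.ModEq, Nat.mod_eq_of_lt hq] at this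
  -- the `r`-th vertex is `pt (A ⌈r/2⌉) (c.2 (A ⌊r/2⌋))`: even steps move along a row,
  -- odd steps along a column
  refine hasDirectedCycle_of_periodic (m := 2 * q)
    (P := fun r => pt (A ((r + 1) / 2)) (c.2 (A (r / 2)))) (by omega) (fun r => ?_) ?_ ?_
  · beta_reduce
    rw [show (r + 2 * q + 1) / 2 = (r + 1) / 2 + q by omega,
      show (r + 2 * q) / 2 = r / 2 + q by omega]
    simp only [A, iterate_add_minimalPeriod_eq, q]
  · intro r hr r' hr' h
    obtain ⟨h1, h2⟩ := hpt _ _ _ _ h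
    have e2 := (hB _ _ h2).eq_of_lt_of_lt (by omega) (by omega)
    rw [hA, show (r + 1) / 2 = r / 2 + r % 2 by omega,
      show (r' + 1) / 2 = r' / 2 + r' % 2 by omega, e2] at h1
    have := (Nat.ModEq.add_left_cancel' _ h1).eq_of_lt_of_lt (by omega) (by omega)
    omega
  · intro r
    rcases Nat.even_or_odd' r with ⟨w, rfl | rfl⟩
    · simp only [show (2 * w + 1) / 2 = w by omega, show 2 * w / 2 = w by omega,
        show (2 * w + 1 + 1) / 2 = w + 1 by omega, hA_succ]
      exact hrow _ _ fun h => hstep w ((hA _ _).1 (h.trans (hA_succ w).symm))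
    · simp only [show (2 * w + 1 + 1) / 2 = w + 1 by omega, show (2 * w + 1) / 2 = w by omega,
        show (2 * w + 1 + 1 + 1) / 2 = w + 1 by omega]
      exact hcol _ _ fun h => hstep w (hB _ _ (h.trans (by rw [hA_succ])))

end PlaneCfg

section Hamming

variable {n : ℕ} {k : Fin n → ℕ}

/-- The plane in the coordinates `2s` and `2s + 1` with the given values on the remaining
coordinates. -/
abbrev Plane (n : ℕ) (k : Fin n → ℕ) :=
  Σ s : Fin (n / 2), ∀ t : {t : Fin n // t.1 ≠ 2 * s.1 ∧ t.1 ≠ 2 * s.1 + 1}, Fin (k t)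

abbrev Line (n : ℕ) (k : Fin n → ℕ) := Σ i : Fin n, ∀ j : {j : Fin n // j ≠ i}, Fin (k j)

namespace Plane

def fst (z : Plane n k) : Fin n := ⟨2 * z.1, by omega⟩

def snd (z : Plane n k) : Fin n := ⟨2 * z.1 + 1, by omega⟩

theorem fst_ne_snd (z z' : Plane n k) : z.fst ≠ z'.snd := by
  simp only [fst, snd, ne_eq, Fin.ext_iff]; omega

variable (z : Plane n k)

def pt (x : Fin (k z.fst)) (y : Fin (k z.snd)) : GVert n k := fun t =>
  if h₁ : t = z.fst then Fin.cast (congrArg k h₁.symm) x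
  else if h₂ : t = z.snd then Fin.cast (congrArg k h₂.symm) y
  else z.2 ⟨t, fun h => h₁ (Fin.ext h), fun h => h₂ (Fin.ext h)⟩

def rowLine (y : Fin (k z.snd)) : ∀ j : {j : Fin n // j ≠ z.fst}, Fin (k j) := fun j =>
  if h₂ : j.1 = z.snd then Fin.cast (congrArg k h₂.symm) y
  else z.2 ⟨j, fun h => j.2 (Fin.ext h), fun h => h₂ (Fin.ext h)⟩

def colLine (x : Fin (k z.fst)) : ∀ j : {j : Fin n // j ≠ z.snd}, Fin (k j) := fun j =>
  if h₁ : j.1 = z.fst then Fin.cast (congrArg k h₁.symm) x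
  else z.2 ⟨j, fun h => h₁ (Fin.ext h), fun h => j.2 (Fin.ext h)⟩

@[simp] theorem pt_fst (x y) : z.pt x y z.fst = x := by simp [pt]

@[simp] theorem pt_snd (x y) : z.pt x y z.snd = y := by simp [pt, (fst_ne_snd z z).symm]

theorem pt_injective {x x' y y'} (h : z.pt x y = z.pt x' y') : x = x' ∧ y = y' :=
  ⟨by simpa using congrFun h z.fst, by simpa using congrFun h z.snd⟩

theorem pt_restrict_eq_rowLine (x y) :
    (fun j : {j : Fin n // j ≠ z.fst} => z.pt x y j) = z.rowLine y := by
  funext j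
  simp [pt, rowLine, j.2]

theorem pt_restrict_eq_colLine (x y) :
    (fun j : {j : Fin n // j ≠ z.snd} => z.pt x y j) = z.colLine x := by
  funext j
  by_cases h : j.1 = z.fst <;> simp [pt, colLine, j.2, h]

def cfg (ω : LSpace n k) : PlaneCfg (k z.fst) (k z.snd) :=
  (fun y => ω z.fst (z.rowLine y), fun x => ω z.snd (z.colLine x))

theorem bredge_row (ω : LSpace n k) {x y} (h : x ≠ (z.cfg ω).1 y) :
    BREdge ω (z.pt x y) (z.pt ((z.cfg ω).1 y) y) := by
  refine ⟨fun he => h (z.pt_injective he).1, z.fst, fun j hj => ?_, ?_⟩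
  · by_cases h₂ : j = z.snd
    · subst h₂; simp
    · simp [pt, hj, h₂]
  · rw [pt_restrict_eq_rowLine, pt_fst]; rfl

theorem bredge_col (ω : LSpace n k) {x y} (h : y ≠ (z.cfg ω).2 x) :
    BREdge ω (z.pt x y) (z.pt x ((z.cfg ω).2 x)) := by
  refine ⟨fun he => h (z.pt_injective he).2, z.snd, fun j hj => ?_, ?_⟩
  · by_cases h₁ : j = z.fst
    · subst h₁; simp
    · simp [pt, hj, h₁]
  · rw [pt_restrict_eq_colLine, pt_snd]; rfl

theorem hasCycle_of_isCyclic {ω : LSpace n k} (h : (z.cfg ω).IsCyclic) : HasCycle ω :=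
  h.hasDirectedCycle z.pt (fun _ _ _ _ => z.pt_injective) (fun _ _ => z.bredge_row ω)
    fun _ _ => z.bredge_col ω

end Plane

def planeLine : (Σ z : Plane n k, Fin (k z.snd) ⊕ Fin (k z.fst)) → Line n k
  | ⟨z, .inl y⟩ => ⟨z.fst, z.rowLine y⟩
  | ⟨z, .inr x⟩ => ⟨z.snd, z.colLine x⟩

theorem planeLine_injective : Injective (planeLine (n := n) (k := k)) := by
  rintro ⟨⟨s, c⟩, y | x⟩ ⟨⟨s', c'⟩, y' | x'⟩ h <;> obtain ⟨hs, h⟩ := Sigma.mk.inj_iff.1 h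
  · obtain rfl : s = s' := Fin.ext (by simpa [Plane.fst, Fin.ext_iff] using hs)
    have h := eq_of_heq h
    obtain rfl : y = y' := by
      have := congrArg Fin.val (congrFun h ⟨Plane.snd ⟨s, c⟩, (Plane.fst_ne_snd _ _).symm⟩)
      simp [Plane.rowLine, Plane.snd] at this
      exact Fin.ext this
    obtain rfl : c = c' := funext fun t => by
      simpa [Plane.rowLine, Plane.snd, Plane.fst, Fin.ext_iff, t.2.1, t.2.2] using
        congrFun h ⟨t.1, fun he => t.2.1 (congrArg Fin.val he)⟩
    rfl
  · exact absurd hs (Plane.fst_ne_snd _ _)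
  · exact absurd hs.symm (Plane.fst_ne_snd _ _)
  · obtain rfl : s = s' := Fin.ext (by simpa [Plane.snd, Fin.ext_iff] using hs)
    have h := eq_of_heq h
    obtain rfl : x = x' := by
      have := congrArg Fin.val (congrFun h ⟨Plane.fst ⟨s, c⟩, Plane.fst_ne_snd _ _⟩)
      simp [Plane.colLine, Plane.fst] at this
      exact Fin.ext this
    obtain rfl : c = c' := funext fun t => by
      simpa [Plane.colLine, Plane.snd, Plane.fst, Fin.ext_iff, t.2.1, t.2.2] using
        congrFun h ⟨t.1, fun he => t.2.2 (congrArg Fin.val he)⟩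
    rfl

theorem le_card_plane {km : ℕ} (hkm : ∀ i, km ≤ k i) :
    n / 2 * km ^ (n - 2) ≤ Fintype.card (Plane n k) := by
  rw [Fintype.card_sigma]
  calc n / 2 * km ^ (n - 2) = ∑ _s : Fin (n / 2), km ^ (n - 2) := by simp
    _ ≤ _ := Finset.sum_le_sum fun s _ => ?_
  have hs : 2 * s.1 + 1 < n := by omega
  have hcard : Fintype.card {t : Fin n // t.1 ≠ 2 * s.1 ∧ t.1 ≠ 2 * s.1 + 1} = n - 2 := by
    rw [Fintype.card_subtype]
    have : (Finset.univ.filter fun t : Fin n => t.1 ≠ 2 * s.1 ∧ t.1 ≠ 2 * s.1 + 1) =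
        Finset.univ \ {⟨2 * s.1, by omega⟩, ⟨2 * s.1 + 1, hs⟩} := by
      ext t; simp [Fin.ext_iff]
    rw [this, Finset.card_sdiff_of_subset (Finset.subset_univ _), Finset.card_pair (by simp)]
    simp
  rw [Fintype.card_pi]
  simpa [hcard] using Finset.pow_card_le_prod Finset.univ
    (fun t : {t : Fin n // t.1 ≠ 2 * s.1 ∧ t.1 ≠ 2 * s.1 + 1} => k t) km fun t _ => hkm t

theorem eight_pow_mul_ncard_acyclic_le (hk : ∀ i, 2 ≤ k i) :
    8 ^ Fintype.card (Plane n k) * {ω : LSpace n k | ¬ HasCycle ω}.ncard ≤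
      7 ^ Fintype.card (Plane n k) * Fintype.card (LSpace n k) := by
  let uncurry : LSpace n k ≃ ∀ ℓ : Line n k, Fin (k ℓ.1) := (Equiv.piCurry _).symm
  let P (z : Plane n k) (w : ∀ t, Fin (k (planeLine ⟨z, t⟩).1)) : Prop :=
    ¬ PlaneCfg.IsCyclic (fun y => w (.inl y), fun x => w (.inr x))
  have hP (z : Plane n k) :
      8 * Nat.card {w // P z w} ≤ 7 * Nat.card (∀ t, Fin (k (planeLine ⟨z, t⟩).1)) := by
    let e := Equiv.sumPiEquivProdPi fun t => Fin (k (planeLine ⟨z, t⟩).1)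
    rw [Nat.card_congr (e.subtypeEquiv (p := P z)
      (q := fun c : PlaneCfg (k z.fst) (k z.snd) => ¬ c.IsCyclic) fun _ => Iff.rfl),
      Nat.card_congr e]
    have := PlaneCfg.eight_mul_ncard_not_isCyclic_le (hk z.fst) (hk z.snd)
    rwa [← Nat.card_coe_set_eq] at this
  have hacyclic : {ω : LSpace n k | ¬ HasCycle ω}.ncard ≤
      Nat.card {ω : ∀ ℓ : Line n k, Fin (k ℓ.1) // ∀ z, P z fun t => ω (planeLine ⟨z, t⟩)} := by
    rw [← Nat.card_congr (uncurry.subtypeEquiv fun _ => Iff.rfl), ← Nat.card_coe_set_eq]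
    exact Set.ncard_le_ncard fun ω hω z hz => hω (z.hasCycle_of_isCyclic hz)
  rw [← Nat.card_eq_fintype_card (α := LSpace n k), Nat.card_congr uncurry]
  exact (Nat.mul_le_mul_left _ hacyclic).trans
    (pow_mul_card_forall_restrict_le (β := fun ℓ : Line n k => Fin (k ℓ.1)) planeLine
      planeLine_injective P hP)

theorem ncard_acyclic_div_card_le (hk : ∀ i, 2 ≤ k i) :
    ({ω : LSpace n k | ¬ HasCycle ω}.ncard : ℝ) / Fintype.card (LSpace n k) ≤
      Real.exp (-(Fintype.card (Plane n k) / 8)) := by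
  have hΩ : (0 : ℝ) < Fintype.card (LSpace n k) :=
    Nat.cast_pos.2 (Fintype.card_pos_iff.2 ⟨fun i _ => ⟨0, by have := hk i; omega⟩⟩)
  have h78 : (7 / 8 : ℝ) ≤ Real.exp (-1 / 8) := by linarith [Real.add_one_le_exp (-1 / 8)]
  calc _ ≤ ((7 / 8 : ℝ)) ^ Fintype.card (Plane n k) := by
        rw [div_le_iff₀ hΩ, div_pow, div_mul_eq_mul_div, le_div_iff₀ (by positivity)]
        exact_mod_cast (mul_comm _ _).trans_le (eight_pow_mul_ncard_acyclic_le hk)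
    _ ≤ Real.exp (-1 / 8) ^ Fintype.card (Plane n k) := by gcongr
    _ = _ := by rw [← Real.exp_nat_mul]; ring_nf

end Hamming

/-- There is a constant `c > 0` such that for all `n ≥ 2` and all `k` with each
`kᵢ ≥ 2`, the probability that `L(n,k)` is acyclic is at most
`exp(-c n k_min^(n-2))`. -/
theorem stmt16 :
    ∃ c : ℝ, 0 < c ∧ ∀ n : ℕ, 2 ≤ n → ∀ k : Fin n → ℕ, (∀ i, 2 ≤ k i) →
      ∀ km : ℕ, (∀ i, km ≤ k i) → (∃ i, k i = km) →
        ({ω : LSpace n k | ¬ HasCycle ω}.ncard : ℝ) / (Fintype.card (LSpace n k)) ≤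
          Real.exp (-(c * n * km ^ (n - 2))) := by
  refine ⟨1 / 32, by norm_num, fun n hn k hk km hkm _ => ?_⟩
  refine (ncard_acyclic_div_card_le hk).trans (Real.exp_le_exp.2 (neg_le_neg ?_))
  have hplanes : n * km ^ (n - 2) ≤ 4 * Fintype.card (Plane n k) :=
    calc n * km ^ (n - 2) ≤ 4 * (n / 2) * km ^ (n - 2) := by gcongr; omega
      _ ≤ 4 * Fintype.card (Plane n k) := by rw [mul_assoc]; gcongr; exact le_card_plane hkm
  have := (Nat.cast_le (α := ℝ)).2 hplanes
  push_cast at this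
  linarith
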